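/- Let v₁v₂v₃v₄ be a unit 4-cycle in ℤ². If in a lattice diagram each vertex vᵢ is a crossing and the cyclic pattern of crossings is such that edge vᵢvᵢ₊₁ is an understrand at vᵢ and an overstrand at vᵢ₊₁ for all i mod 4 (an Escher square), then the associated digraph contains the directed 4-cycle e₁→e₂→e₃→e₄→e₁ where eᵢ = vᵢvᵢ₊₁; consequently the diagram is not realizable. -/

import Mathlib

/-- A lattice diagram: a subgraph of the grid graph on `ℤ²` (adjacency only
between lattice points at distance 1) in which every vertex incident to an
edge has degree 2 or 4, together with over/under information at each
degree-4 vertex (crossing): `horizOver v = true` means the horizontal strand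
through `v` is the overstrand. -/
structure LatticeDiagram where
  Adj : (ℤ × ℤ) → (ℤ × ℤ) → Prop
  symm : ∀ p q, Adj p q → Adj q p
  unit : ∀ p q, Adj p q → (p.1 - q.1) ^ 2 + (p.2 - q.2) ^ 2 = 1
  deg : ∀ p q, Adj p q → {r | Adj p r}.ncard = 2 ∨ {r | Adj p r}.ncard = 4
  horizOver : (ℤ × ℤ) → Bool

/-- A crossing of a lattice diagram: a vertex of degree 4. -/
def LatticeDiagram.IsCrossing (D : LatticeDiagram) (v : ℤ × ℤ) : Prop :=
  {r | D.Adj v r}.ncard = 4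

/-- The edge of `D` from `v` to `p` is an understrand at the crossing `v`. -/
def LatticeDiagram.UnderAt (D : LatticeDiagram) (v p : ℤ × ℤ) : Prop :=
  D.Adj v p ∧ ((p.2 = v.2 ∧ D.horizOver v = false) ∨ (p.1 = v.1 ∧ D.horizOver v = true))

/-- The edge of `D` from `v` to `p` is an overstrand at the crossing `v`. -/
def LatticeDiagram.OverAt (D : LatticeDiagram) (v p : ℤ × ℤ) : Prop :=
  D.Adj v p ∧ ((p.2 = v.2 ∧ D.horizOver v = true) ∨ (p.1 = v.1 ∧ D.horizOver v = false))

/-- The associated digraph `Γ` of a lattice diagram `D`: its vertices are the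
edges of `D` (as unordered pairs), with a directed edge `e → f` whenever `e`
and `f` meet at a crossing `v` of `D` with `e` the understrand and `f` the
overstrand at `v`. -/
def GammaEdge (D : LatticeDiagram) (e f : Sym2 (ℤ × ℤ)) : Prop :=
  ∃ v p q : ℤ × ℤ, D.IsCrossing v ∧ D.UnderAt v p ∧ D.OverAt v q ∧
    e = s(v, p) ∧ f = s(v, q)

/-- A directed cycle: a nonempty cyclic sequence of distinct vertices each
joined to the next by a directed edge. -/
def HasDirectedCycle {V : Type*} (E : V → V → Prop) : Prop :=
  ∃ (n : ℕ) (c : Fin (n + 1) → V), Function.Injective c ∧ ∀ i, E (c i) (c (i + 1))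

/-- A directed 4-cycle. -/
def Has4Cycle {V : Type*} (E : V → V → Prop) : Prop :=
  ∃ c : Fin 4 → V, Function.Injective c ∧ ∀ i, E (c i) (c (i + 1))

/-- An Escher square in a lattice diagram: a unit 4-cycle `v₁v₂v₃v₄` of edges
of `D` such that, up to reversing all four crossings, every edge `vᵢvᵢ₊₁` is
an understrand at `vᵢ` and an overstrand at `vᵢ₊₁` (indices mod 4). -/
def EscherSquare (D : LatticeDiagram) : Prop :=
  ∃ v : Fin 4 → ℤ × ℤ, Function.Injective v ∧ (∀ i, D.Adj (v i) (v (i + 1))) ∧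
    ((∀ i, D.UnderAt (v i) (v (i + 1)) ∧ D.OverAt (v (i + 1)) (v i)) ∨
     (∀ i, D.OverAt (v i) (v (i + 1)) ∧ D.UnderAt (v (i + 1)) (v i)))

/-- A lattice link: a subgraph of the grid graph on `ℤ³ = (ℤ × ℤ) × ℤ`
(adjacency only between lattice points at distance 1) in which every vertex
incident to an edge has degree exactly 2, i.e. a disjoint union of cycles.
A point is recorded as `(xy, z)` with `xy : ℤ × ℤ` its projection and `z` its
height; the projection `π` is `(xy, z) ↦ xy`. -/
structure LatticeLink where
  Adj : ((ℤ × ℤ) × ℤ) → ((ℤ × ℤ) × ℤ) → Prop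
  symm : ∀ p q, Adj p q → Adj q p
  unit : ∀ p q, Adj p q →
    (p.1.1 - q.1.1) ^ 2 + (p.1.2 - q.1.2) ^ 2 + (p.2 - q.2) ^ 2 = 1
  deg2 : ∀ p q, Adj p q → {r | Adj p r}.ncard = 2

/-- A point of `ℤ³` lying on the link `L`. -/
def LatticeLink.Vtx (L : LatticeLink) (p : (ℤ × ℤ) × ℤ) : Prop := ∃ q, L.Adj p q

/-- Two heights `h, h'` lie in the same connected component of the preimage
`π⁻¹(v) ∩ L` of the vertex `v` of the diagram. -/
def FiberConn (L : LatticeLink) (v : ℤ × ℤ) (h h' : ℤ) : Prop :=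
  Relation.ReflTransGen (fun a b => L.Adj (v, a) (v, b)) h h'

/-- `L` realizes `D` as in Definition 1.1: `π(L) = D`, the preimage of (the
interior of) each edge of `D` is a single edge of `L` at a single height, the
preimage of each degree-2 vertex is connected, and the preimage of each
crossing has exactly two connected components, each point of the higher
component lying strictly above each point of the lower one, with the higher
component attached to the lifts of the two overstrands and the lower one to
the lifts of the two understrands. -/
def Realizes (D : LatticeDiagram) (L : LatticeLink) : Prop :=
  -- every edge of L is vertical (over a vertex of D) or projects to an edge of D
  (∀ p q, L.Adj p q → (p.1 = q.1 ∧ ∃ r, D.Adj p.1 r) ∨ D.Adj p.1 q.1) ∧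
  -- each edge of D has exactly one lift
  (∀ a b, D.Adj a b → ∃! h : ℤ, L.Adj (a, h) (b, h)) ∧
  -- the preimage of a degree-2 vertex is connected
  (∀ v : ℤ × ℤ, (∃ r, D.Adj v r) → ¬ D.IsCrossing v →
    ∀ h h', L.Vtx (v, h) → L.Vtx (v, h') → FiberConn L v h h') ∧
  -- the preimage of a crossing has exactly two components, the higher one
  -- attached to the lifts of the overstrands
  (∀ v : ℤ × ℤ, D.IsCrossing v → ∃ hu ho : ℤ,
    L.Vtx (v, hu) ∧ L.Vtx (v, ho) ∧ ¬ FiberConn L v hu ho ∧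
    (∀ h, L.Vtx (v, h) → FiberConn L v h hu ∨ FiberConn L v h ho) ∧
    (∀ h h', FiberConn L v hu h → FiberConn L v ho h' → h < h') ∧
    (∀ (p : ℤ × ℤ) (h : ℤ), L.Adj (v, h) (p, h) →
      (D.OverAt v p → FiberConn L v h ho) ∧ (D.UnderAt v p → FiberConn L v h hu)))

/-- A lattice diagram is realizable if some lattice link realizes it. -/
def Realizable (D : LatticeDiagram) : Prop := ∃ L : LatticeLink, Realizes D L

/- Lift each edge of `D` to a horizontal edge of `L`. At a crossing the
lifts of the understrands lie strictly below those of the overstrands, so along every arc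
`e → f` of the associated digraph the height strictly increases, and no closed walk exists.
In an Escher square the four edges form such a closed walk, each `eᵢ₊₁` passing under `eᵢ`
at `vᵢ₊₁`. -/

theorem not_forall_apply_lt_of_finite {ι α : Type*} [Finite ι] [Nonempty ι] [Preorder α]
    (f : ι → α) (s : ι → ι) : ¬ ∀ i, f (s i) < f i := by
  intro hlt
  obtain ⟨_, ⟨i, rfl⟩, hmin⟩ := (Set.finite_range f).exists_minimal (Set.range_nonempty f)
  exact (hmin (Set.mem_range_self (s i)) (hlt i).le).not_gt (hlt i)

theorem FiberConn.symm {L : LatticeLink} {w : ℤ × ℤ} {a b : ℤ} (h : FiberConn L w a b) :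
    FiberConn L w b a :=
  haveI : Std.Symm fun x y : ℤ => L.Adj (w, x) (w, y) := ⟨fun _ _ => L.symm _ _⟩
  Std.Symm.symm (r := Relation.ReflTransGen _) _ _ h

theorem LatticeLink.adj_of_sym2_eq (L : LatticeLink) {a b c d : ℤ × ℤ} {h : ℤ}
    (he : s(a, b) = s(c, d)) (hcd : L.Adj (c, h) (d, h)) : L.Adj (a, h) (b, h) := by
  rcases Sym2.eq_iff.mp he with ⟨rfl, rfl⟩ | ⟨rfl, rfl⟩
  · exact hcd
  · exact L.symm _ _ hcd

theorem GammaEdge.exists_adj_right {D : LatticeDiagram} {e f : Sym2 (ℤ × ℤ)}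
    (hef : GammaEdge D e f) : ∃ a b, f = s(a, b) ∧ D.Adj a b := by
  obtain ⟨w, -, q, -, -, hq, -, rfl⟩ := hef
  exact ⟨w, q, rfl, hq.1⟩

namespace Realizes

variable {D : LatticeDiagram} {L : LatticeLink}

theorem exists_lift (hL : Realizes D L) {a b : ℤ × ℤ} (hab : D.Adj a b) :
    ∃ h, L.Adj (a, h) (b, h) :=
  (hL.2.1 a b hab).exists

theorem lift_lt_of_gammaEdge (hL : Realizes D L) {e f : Sym2 (ℤ × ℤ)} (hef : GammaEdge D e f)
    {a b c d : ℤ × ℤ} {h h' : ℤ} (he : e = s(a, b)) (hf : f = s(c, d))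
    (hab : L.Adj (a, h) (b, h)) (hcd : L.Adj (c, h') (d, h')) : h < h' := by
  obtain ⟨w, p, q, hw, hp, hq, rfl, rfl⟩ := hef
  obtain ⟨_, _, -, -, -, -, hbelow, hattach⟩ := hL.2.2.2 w hw
  have hunder := (hattach p h (L.adj_of_sym2_eq he hab)).2 hp
  have hover := (hattach q h' (L.adj_of_sym2_eq hf hcd)).1 hq
  exact hbelow _ _ hunder.symm hover.symm

theorem not_forall_gammaEdge_succ (hL : Realizes D L) {n : ℕ} (c : Fin (n + 1) → Sym2 (ℤ × ℤ)) :
    ¬ ∀ i, GammaEdge D (c (i + 1)) (c i) := by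
  intro hc
  choose a b hc_eq hab using fun i => (hc i).exists_adj_right
  choose h hlift using fun i => hL.exists_lift (hab i)
  exact not_forall_apply_lt_of_finite h (· + 1) fun i =>
    hL.lift_lt_of_gammaEdge (hc i) (hc_eq (i + 1)) (hc_eq i) (hlift (i + 1)) (hlift i)

end Realizes

theorem stmt_15_general (D : LatticeDiagram) (v : Fin 4 → ℤ × ℤ)
    (hcross : ∀ i, D.IsCrossing (v i))
    (hpat : ∀ i, D.UnderAt (v i) (v (i + 1)) ∧ D.OverAt (v (i + 1)) (v i)) :
    (∀ i : Fin 4, GammaEdge D s(v (i + 1), v (i + 2)) s(v i, v (i + 1))) ∧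
      ¬ Realizable D := by
  have hΓ : ∀ i : Fin 4, GammaEdge D s(v (i + 1), v (i + 1 + 1)) s(v i, v (i + 1)) := fun i =>
    ⟨v (i + 1), v (i + 1 + 1), v i, hcross (i + 1), (hpat (i + 1)).1, (hpat i).2, rfl,
      Sym2.eq_swap⟩
  refine ⟨fun i => add_assoc i 1 1 ▸ hΓ i, ?_⟩
  rintro ⟨L, hL⟩
  exact hL.not_forall_gammaEdge_succ (fun i => s(v i, v (i + 1))) hΓ

/-- If `v₁v₂v₃v₄` is a unit 4-cycle in a lattice diagram all of whose vertices
are crossings, with each edge `vᵢvᵢ₊₁` an understrand at `vᵢ` and an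
overstrand at `vᵢ₊₁` (an Escher square), then the associated digraph contains
the directed 4-cycle on the edges `eᵢ = vᵢvᵢ₊₁` (namely `eᵢ₊₁ → eᵢ` for all
`i` mod 4, since `eᵢ₊₁` is the understrand and `eᵢ` the overstrand at the
crossing `vᵢ₊₁`); consequently the diagram is not realizable. -/
theorem stmt_15 (D : LatticeDiagram) (v : Fin 4 → ℤ × ℤ)
    (hinj : Function.Injective v)
    (hadj : ∀ i, D.Adj (v i) (v (i + 1)))
    (hcross : ∀ i, D.IsCrossing (v i))
    (hpat : ∀ i, D.UnderAt (v i) (v (i + 1)) ∧ D.OverAt (v (i + 1)) (v i)) :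
    (∀ i : Fin 4, GammaEdge D s(v (i + 1), v (i + 2)) s(v i, v (i + 1))) ∧
      ¬ Realizable D :=
  stmt_15_general D v hcross hpat
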